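/- For integers 1 ≤ R < A, define p_{R,A}(x) = (2R+2x)/(A+R+1) · C(2A, A−R−x)/C(2A, A−R−1) for 1 ≤ x ≤ A−R, and for an integer m ≥ 1 define q_m(y) = m/((m+y−1)(m+y)) for y ≥ 1. Then there exist constants c₁ ∈ (0,1), c₂ > 0 and N such that for all integers A ≥ N and 1 ≤ R < A, ∑_{x=1}^{A−R} ∑_{y=1}^{∞} p_{R,A}(x) · q_{A+R+x}(y) · (R+x)/√(A+y) ≤ c₁ · R/√A + c₂. -/

import Mathlib

/-- `p_{R,A}(x) = (2R+2x)/(A+R+1) · C(2A, A-R-x)/C(2A, A-R-1)`, for `1 ≤ x ≤ A-R`. -/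
noncomputable def pRA (A R x : ℕ) : ℝ :=
  (2 * (R : ℝ) + 2 * (x : ℝ)) / ((A : ℝ) + R + 1) *
    ((Nat.choose (2 * A) (A - R - x) : ℝ) / (Nat.choose (2 * A) (A - R - 1) : ℝ))

/-- `q_m(y) = m/((m+y-1)(m+y))`, for `y ≥ 1`. -/
noncomputable def qm (m y : ℕ) : ℝ :=
  (m : ℝ) / (((m : ℝ) + y - 1) * ((m : ℝ) + y))

/-
Summing over `y` first: `q_m(y+1) = m/(m+y) - m/(m+y+1)` is a probability distribution
on `y` putting mass `A/(m+A) ≤ 1/2` below `A` when `m ≥ A`. As `1/√(A+y+1)` is at most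
`1/√A` below `A` and at most `1/√(2A)` from `A` on, the inner sum is at most `c/√A` with
`c = (1 + 1/√2)/2 < 1`.

Substituting `k = A-R-x` and summing by parts with
`(A-k-1) C(2A,k+1) = A (C(2A-1,k+1) - C(2A-1,k))`, the mean
`∑ₓ p_{R,A}(x) (R+x)` equals `R + 1 + ∑_{k<n} C(2A-1,k) / C(2A-1,n)` with `n = A-R-1 < A`.
Going down from `n`, each binomial `C(2A-1,n-d)` shrinks to the next by a factor at most
`(A-d-1)/(A+d+1)`, which is at most `ρ = (A-s-1)/(A+s+1)` once `d ≥ s = ⌊√A⌋`; so the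
ratio of sums is at most `s + 1/(1-ρ) ≤ 2√A`, and the double sum is at most
`c (R+1+2√A)/√A ≤ c R/√A + 3`.
-/

open Finset Real Filter

lemma tsum_mul_le_of_mass_le_half {w g : ℕ → ℝ} {K : ℕ} {a b : ℝ} (hw0 : ∀ y, 0 ≤ w y)
    (hw : HasSum w 1) (hK : ∑ y ∈ range K, w y ≤ 1 / 2) (hg0 : ∀ y, 0 ≤ g y)
    (hlt : ∀ y < K, g y ≤ a) (hge : ∀ y, K ≤ y → g y ≤ b) (hba : b ≤ a) :
    ∑' y, w y * g y ≤ (a + b) / 2 := by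
  set S := ∑ y ∈ range K, w y
  set h : ℕ → ℝ := fun y => b * w y + (a - b) * if y ∈ range K then w y else 0
  have hgh : ∀ y, w y * g y ≤ h y := fun y => by
    by_cases hy : y < K
    · simp only [h, mem_range, if_pos hy]; nlinarith [hw0 y, hlt y hy]
    · simp only [h, mem_range, if_neg hy]; nlinarith [hw0 y, hge y (not_lt.mp hy)]
  have hlow : HasSum (fun y => if y ∈ range K then w y else 0) S := by
    have : HasSum (fun y => if y ∈ range K then w y else 0)
        (∑ y ∈ range K, if y ∈ range K then w y else 0) :=
      hasSum_sum_of_ne_finset_zero fun y hy => if_neg hy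
    rwa [sum_congr rfl fun y hy => if_pos hy] at this
  have hh : HasSum h (b * 1 + (a - b) * S) := (hw.mul_left b).add (hlow.mul_left (a - b))
  have hsum : Summable fun y => w y * g y :=
    hh.summable.of_nonneg_of_le (fun y => mul_nonneg (hw0 y) (hg0 y)) hgh
  calc ∑' y, w y * g y ≤ b * 1 + (a - b) * S :=
        (hsum.tsum_le_tsum hgh hh.summable).trans_eq hh.tsum_eq
    _ ≤ (a + b) / 2 := by nlinarith

lemma qm_succ (m y : ℕ) : qm m (y + 1) = m / ((m + y) * (m + y + 1)) := by
  unfold qm; push_cast; ring_nf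

lemma qm_succ_nonneg (m y : ℕ) : 0 ≤ qm m (y + 1) := by
  rw [qm_succ]; positivity

lemma qm_succ_eq_sub {m : ℕ} (hm : 0 < m) (y : ℕ) :
    qm m (y + 1) = m / (m + y) - m / (m + y + 1) := by
  have : (0 : ℝ) < m + y := by positivity
  rw [qm_succ, div_sub_div _ _ this.ne' (by positivity)]
  congr 1
  ring

lemma sum_range_qm_succ {m : ℕ} (hm : 0 < m) (n : ℕ) :
    ∑ y ∈ range n, qm m (y + 1) = 1 - m / (m + n) := by
  set f : ℕ → ℝ := fun y => m / (m + y)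
  calc ∑ y ∈ range n, qm m (y + 1) = ∑ y ∈ range n, (f y - f (y + 1)) :=
        sum_congr rfl fun y _ => by rw [qm_succ_eq_sub hm]; push_cast [f]; ring_nf
    _ = f 0 - f n := sum_range_sub' f n
    _ = 1 - m / (m + n) := by simp [f, (Nat.cast_pos.mpr hm).ne']

lemma hasSum_qm_succ {m : ℕ} (hm : 0 < m) : HasSum (fun y => qm m (y + 1)) 1 := by
  rw [hasSum_iff_tendsto_nat_of_nonneg (qm_succ_nonneg m)]
  simp_rw [sum_range_qm_succ hm]
  have : Tendsto (fun n : ℕ => (m : ℝ) / (m + n)) atTop (nhds 0) :=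
    tendsto_const_nhds.div_atTop (tendsto_atTop_add_const_left _ _ tendsto_natCast_atTop_atTop)
  simpa using this.const_sub 1

lemma tsum_qm_succ_div_sqrt_le {A m : ℕ} (hA : 0 < A) (hAm : A ≤ m) :
    ∑' y : ℕ, qm m (y + 1) / √(A + y + 1) ≤ (1 + (√2)⁻¹) / 2 / √A := by
  have hA' : (0 : ℝ) < A := by exact_mod_cast hA
  have hmass : ∑ y ∈ range A, qm m (y + 1) ≤ 1 / 2 := by
    have : (A : ℝ) ≤ m := by exact_mod_cast hAm
    rw [sum_range_qm_succ (hA.trans_le hAm), sub_le_iff_le_add, ← sub_le_iff_le_add',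
      le_div_iff₀ (by positivity)]
    linarith
  have key := tsum_mul_le_of_mass_le_half (g := fun y : ℕ => (√(A + y + 1))⁻¹)
    (a := (√A)⁻¹) (b := (√(2 * A))⁻¹) (qm_succ_nonneg m) (hasSum_qm_succ (hA.trans_le hAm))
    hmass (fun y => by positivity) (fun y _ => ?_) (fun y hy => ?_) ?_
  · calc _ = ∑' y : ℕ, qm m (y + 1) * (√(A + y + 1))⁻¹ := by simp_rw [div_eq_mul_inv]
      _ ≤ _ := key
      _ = _ := by rw [sqrt_mul zero_le_two, mul_inv]; ring
  · gcongr; linarith [(Nat.cast_nonneg y : (0 : ℝ) ≤ y)]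
  · have : (A : ℝ) ≤ y := by exact_mod_cast hy
    gcongr; linarith
  · gcongr; linarith

lemma cast_sub_mul_choose (N k : ℕ) : ((N : ℝ) - k) * N.choose k = N * (N - 1).choose k := by
  rcases le_or_gt k N with hk | hk
  · rw [← Nat.cast_sub hk]
    rcases N with _ | N
    · simp_all
    · have := Nat.choose_mul_succ_eq N k
      rw [Nat.add_sub_cancel]
      exact_mod_cast by linarith
  · rw [Nat.choose_eq_zero_of_lt hk, Nat.choose_eq_zero_of_lt (by omega)]
    simp

lemma sub_mul_choose_succ {A : ℕ} (hA : 0 < A) (n : ℕ) :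
    ((A : ℝ) - (n + 1)) * (2 * A).choose (n + 1)
      = A * ((2 * A - 1).choose (n + 1) - (2 * A - 1).choose n) := by
  have hsub := cast_sub_mul_choose (2 * A) (n + 1)
  have hpascal : ((2 * A).choose (n + 1) : ℝ)
      = (2 * A - 1).choose n + (2 * A - 1).choose (n + 1) := by
    obtain ⟨M, hM⟩ : ∃ M, 2 * A = M + 1 := ⟨2 * A - 1, by omega⟩
    rw [hM, Nat.choose_succ_succ, Nat.add_sub_cancel]
    push_cast; ring
  push_cast at hsub
  linear_combination hsub - (A : ℝ) * hpascal

lemma sum_range_sq_mul_choose {A : ℕ} (hA : 0 < A) (n : ℕ) :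
    ∑ k ∈ range (n + 1), 2 * ((A : ℝ) - k) ^ 2 * (2 * A).choose k
      = 2 * A * ((A - n) * (2 * A - 1).choose n
          + ∑ k ∈ range n, ((2 * A - 1).choose k : ℝ)) := by
  induction n with
  | zero => simp [sq, mul_assoc]
  | succ n ih =>
    rw [sum_range_succ, ih, sum_range_succ]
    push_cast
    linear_combination 2 * ((A : ℝ) - (n + 1)) * sub_mul_choose_succ hA n

lemma sum_pRA_mul_eq {A R : ℕ} (hRA : R < A) :
    ∑ x ∈ Icc 1 (A - R), pRA A R x * (R + x)
      = R + 1 + (∑ k ∈ range (A - R - 1), ((2 * A - 1).choose k : ℝ))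
          / (2 * A - 1).choose (A - R - 1) := by
  set n := A - R - 1
  have hA : 0 < A := by omega
  have hn : ((n : ℕ) : ℝ) = A - R - 1 := by
    rw [show n = A - (R + 1) by omega, Nat.cast_sub (by omega)]; push_cast; ring
  have hC : (0 : ℝ) < (2 * A - 1).choose n := by exact_mod_cast Nat.choose_pos (by omega)
  have hD : ((A : ℝ) + R + 1) * (2 * A).choose n = 2 * A * (2 * A - 1).choose n := by
    have := cast_sub_mul_choose (2 * A) n
    push_cast at this; rw [hn] at this; linear_combination this
  have hreflect : ∑ x ∈ Icc 1 (A - R), pRA A R x * (R + x)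
      = ∑ k ∈ range (n + 1), 2 * ((A : ℝ) - k) ^ 2 * (2 * A).choose k
          / ((A + R + 1) * (2 * A).choose n) := by
    refine sum_nbij' (fun x => A - R - x) (fun k => A - R - k) ?_ ?_ ?_ ?_ ?_ <;>
      simp only [mem_Icc, mem_range, n]
    all_goals try omega
    intro x hx
    rw [pRA, show A - R - x = A - (R + x) by omega, Nat.cast_sub (by omega : R + x ≤ A)]
    push_cast
    field_simp
    ring
  rw [hreflect, ← sum_div, sum_range_sq_mul_choose hA, hD, hn]
  field_simp
  ring

lemma Nat.choose_mul_le_choose_succ_mul {M k u v : ℕ} (hu : u ≤ M - k) (hv : k + 1 ≤ v) :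
    M.choose k * u ≤ M.choose (k + 1) * v :=
  calc M.choose k * u ≤ M.choose k * (M - k) := Nat.mul_le_mul_left _ hu
    _ = M.choose (k + 1) * (k + 1) := (Nat.choose_succ_right_eq M k).symm
    _ ≤ M.choose (k + 1) * v := Nat.mul_le_mul_left _ hv

lemma le_pow_tsub_mul_of_decay {b : ℕ → ℝ} {ρ : ℝ} {s n : ℕ} (hρ : 0 ≤ ρ)
    (hmono : ∀ d < n, b (d + 1) ≤ b d) (hdecay : ∀ d, s ≤ d → d < n → b (d + 1) ≤ ρ * b d) :
    ∀ d ≤ n, b d ≤ ρ ^ (d - s) * b 0 := by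
  intro d hd
  induction d with
  | zero => simp
  | succ d ih =>
    have ih := ih (by omega)
    by_cases hds : s ≤ d
    · calc b (d + 1) ≤ ρ * b d := hdecay d hds (by omega)
        _ ≤ ρ * (ρ ^ (d - s) * b 0) := mul_le_mul_of_nonneg_left ih hρ
        _ = ρ ^ (d + 1 - s) * b 0 := by rw [Nat.sub_add_comm hds, pow_succ]; ring
    · rw [show d + 1 - s = d - s by omega]
      exact (hmono d (by omega)).trans ih

lemma sum_range_pow_tsub_le {ρ : ℝ} (hρ0 : 0 ≤ ρ) (hρ1 : ρ < 1) (s n : ℕ) :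
    ∑ d ∈ range n, ρ ^ (d - s) ≤ s + (1 - ρ)⁻¹ := by
  have hgeom : ∀ k, ∑ i ∈ range k, ρ ^ i ≤ (1 - ρ)⁻¹ := fun k => by
    have := geom_sum_Ico_le_of_lt_one (m := 0) (n := k) hρ0 hρ1
    rwa [← range_eq_Ico, pow_zero, one_div] at this
  rcases le_or_gt n s with hns | hsn
  · calc ∑ d ∈ range n, ρ ^ (d - s) ≤ ∑ d ∈ range n, 1 :=
          sum_le_sum fun d _ => pow_le_one₀ hρ0 hρ1.le
      _ ≤ s + (1 - ρ)⁻¹ := by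
          have : 0 ≤ (1 - ρ)⁻¹ := inv_nonneg.mpr (by linarith)
          simp only [sum_const, card_range, nsmul_eq_mul, mul_one]
          have : (n : ℝ) ≤ s := by exact_mod_cast hns
          linarith
  · obtain ⟨k, rfl⟩ := Nat.exists_eq_add_of_le hsn.le
    rw [sum_range_add]
    have hlow : ∑ d ∈ range s, ρ ^ (d - s) = s := by
      rw [sum_congr rfl fun d hd => by rw [Nat.sub_eq_zero_of_le (mem_range.mp hd).le, pow_zero]]
      simp
    simp only [hlow, Nat.add_sub_cancel_left]
    linarith [hgeom k]

lemma sum_range_le_of_decay {b : ℕ → ℝ} {ρ : ℝ} {s n : ℕ} (hρ0 : 0 ≤ ρ) (hρ1 : ρ < 1)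
    (hb0 : 0 ≤ b 0) (hmono : ∀ d < n, b (d + 1) ≤ b d)
    (hdecay : ∀ d, s ≤ d → d < n → b (d + 1) ≤ ρ * b d) :
    ∑ d ∈ range n, b (d + 1) ≤ (s + (1 - ρ)⁻¹) * b 0 :=
  calc ∑ d ∈ range n, b (d + 1) ≤ ∑ d ∈ range n, ρ ^ (d - s) * b 0 :=
        sum_le_sum fun d hd => (le_pow_tsub_mul_of_decay hρ0 hmono hdecay (d + 1)
          (mem_range.mp hd)).trans (mul_le_mul_of_nonneg_right
            (pow_le_pow_of_le_one hρ0 hρ1.le (by omega)) hb0)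
    _ ≤ (s + (1 - ρ)⁻¹) * b 0 := by
        rw [← sum_mul]; exact mul_le_mul_of_nonneg_right (sum_range_pow_tsub_le hρ0 hρ1 s n) hb0

lemma choose_sub_succ_le {A n d : ℕ} (hd : d < n) (hn : n < A) :
    ((2 * A - 1).choose (n - (d + 1)) : ℝ)
      ≤ (A - (d + 1)) / (A + (d + 1)) * (2 * A - 1).choose (n - d) := by
  have key : (2 * A - 1).choose (n - (d + 1)) * (A + (d + 1))
      ≤ (2 * A - 1).choose (n - (d + 1) + 1) * (A - (d + 1)) :=
    Nat.choose_mul_le_choose_succ_mul (by omega) (by omega)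
  rw [show n - (d + 1) + 1 = n - d by omega] at key
  rw [div_mul_eq_mul_div, le_div_iff₀ (by positivity)]
  have h := (Nat.cast_le (α := ℝ)).mpr key
  push_cast [Nat.cast_sub (by omega : d + 1 ≤ A)] at h
  linarith

lemma sum_range_choose_le_two_sqrt_mul {A n : ℕ} (hA : 2 ≤ A) (hn : n < A) :
    ∑ k ∈ range n, ((2 * A - 1).choose k : ℝ) ≤ 2 * √A * (2 * A - 1).choose n := by
  set s := Nat.sqrt A
  set ρ : ℝ := (A - (s + 1)) / (A + (s + 1))
  have hsA : s + 1 ≤ A := Nat.sqrt_lt_self (by omega)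
  have hsA' : ((s : ℝ) + 1) ≤ A := by exact_mod_cast hsA
  have hρ0 : 0 ≤ ρ := div_nonneg (by linarith) (by positivity)
  have hρ1 : ρ < 1 :=
    (div_lt_one (by positivity)).mpr (by linarith [(s.cast_nonneg : (0 : ℝ) ≤ s)])
  have hratio : ∀ d < n, ((A : ℝ) - (d + 1)) / (A + (d + 1)) ≤ 1 := fun d _ =>
    (div_le_one (by positivity)).mpr (by linarith [(d.cast_nonneg : (0 : ℝ) ≤ d)])
  set b : ℕ → ℝ := fun d => (2 * A - 1).choose (n - d)
  have hstep : ∀ d < n, b (d + 1) ≤ (A - (d + 1)) / (A + (d + 1)) * b d := fun d hd =>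
    choose_sub_succ_le hd hn
  have hmono : ∀ d < n, b (d + 1) ≤ b d := fun d hd =>
    (hstep d hd).trans (mul_le_of_le_one_left (Nat.cast_nonneg _) (hratio d hd))
  have hdecay : ∀ d, s ≤ d → d < n → b (d + 1) ≤ ρ * b d := fun d hsd hd => by
    have : (s : ℝ) ≤ d := by exact_mod_cast hsd
    have : (d : ℝ) + 1 ≤ A := by exact_mod_cast (show d + 1 ≤ A by omega)
    refine (hstep d hd).trans (mul_le_mul_of_nonneg_right ?_ (Nat.cast_nonneg _))
    exact div_le_div₀ (by linarith) (by linarith) (by positivity) (by linarith)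
  have hconst : (s : ℝ) + (1 - ρ)⁻¹ ≤ 2 * √A := by
    have hs : (s : ℝ) ≤ √A := Real.nat_sqrt_le_real_sqrt
    have hs' : √A < s + 1 := Real.real_sqrt_lt_nat_sqrt_succ
    have hsq : √A ^ 2 = A := Real.sq_sqrt (Nat.cast_nonneg A)
    have h1 : 1 ≤ √A := Real.one_le_sqrt.mpr (by exact_mod_cast (by omega : 1 ≤ A))
    have hinv : (1 - ρ)⁻¹ = (A + (s + 1)) / (2 * (s + 1)) := by
      have : (A : ℝ) + (s + 1) ≠ 0 := by positivity
      simp only [ρ]; field_simp; ring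
    have : (A + (s + 1)) / (2 * (s + 1)) ≤ (√A + 1) / 2 := by
      rw [div_le_iff₀ (by positivity)]
      nlinarith [mul_le_mul_of_nonneg_left hs'.le (Real.sqrt_nonneg A)]
    linarith
  calc ∑ k ∈ range n, ((2 * A - 1).choose k : ℝ) = ∑ d ∈ range n, b (d + 1) := by
        rw [← sum_range_reflect]
        exact sum_congr rfl fun d hd => by simp only [b, Nat.sub_sub, add_comm 1 d]
    _ ≤ (s + (1 - ρ)⁻¹) * b 0 := sum_range_le_of_decay hρ0 hρ1 (Nat.cast_nonneg _) hmono hdecay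
    _ ≤ 2 * √A * (2 * A - 1).choose n := mul_le_mul_of_nonneg_right hconst (Nat.cast_nonneg _)

/-- The one-step drift inequality (eqn:tightness) of Lemma 4.2: there are
`c₁ ∈ (0,1)`, `c₂ > 0` and `N` such that for all `A ≥ N` and `1 ≤ R < A`,
`∑_{x=1}^{A-R} ∑_{y=1}^∞ p_{R,A}(x)·q_{A+R+x}(y)·(R+x)/√(A+y) ≤ c₁·R/√A + c₂`
(below the inner summation index `y : ℕ` corresponds to the value `y + 1 ≥ 1`). -/
theorem stmt_17 :
    ∃ c₁ ∈ Set.Ioo (0 : ℝ) 1, ∃ c₂ : ℝ, 0 < c₂ ∧ ∃ N : ℕ,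
      ∀ A : ℕ, N ≤ A → ∀ R : ℕ, 1 ≤ R → R < A →
        (∑ x ∈ Finset.Icc 1 (A - R), ∑' y : ℕ,
          pRA A R x * qm (A + R + x) (y + 1) *
            (((R : ℝ) + x) / Real.sqrt ((A : ℝ) + y + 1)))
          ≤ c₁ * (R : ℝ) / Real.sqrt A + c₂ := by
  set c : ℝ := (1 + (√2)⁻¹) / 2
  have hc1 : c < 1 := by
    have : (√2)⁻¹ < 1 := inv_lt_one_of_one_lt₀ (by simp [Real.lt_sqrt])
    simp only [c]; linarith
  refine ⟨c, ⟨by positivity, hc1⟩, 3, by norm_num, 0, fun A _ R hR hRA => ?_⟩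
  have hA : 1 ≤ √A := Real.one_le_sqrt.mpr (by exact_mod_cast (by omega : 1 ≤ A))
  have hT := sum_range_choose_le_two_sqrt_mul (by omega : 2 ≤ A) (by omega : A - R - 1 < A)
  have hC : (0 : ℝ) < (2 * A - 1).choose (A - R - 1) := by
    exact_mod_cast Nat.choose_pos (by omega)
  calc _ = ∑ x ∈ Icc 1 (A - R), pRA A R x * (R + x) *
          ∑' y : ℕ, qm (A + R + x) (y + 1) / √(A + y + 1) := by
        refine sum_congr rfl fun x _ => ?_
        rw [← tsum_mul_left]
        exact tsum_congr fun y => by ring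
    _ ≤ ∑ x ∈ Icc 1 (A - R), pRA A R x * (R + x) * (c / √A) := by
        refine sum_le_sum fun x _ => mul_le_mul_of_nonneg_left
          (tsum_qm_succ_div_sqrt_le (by omega) (by omega)) ?_
        unfold pRA; positivity
    _ ≤ (R + 1 + 2 * √A) * (c / √A) := by
        rw [← sum_mul, sum_pRA_mul_eq hRA]
        gcongr
        rwa [div_le_iff₀ hC]
    _ ≤ c * R / √A + 3 := by
        have : c / √A ≤ 1 := div_le_one_of_le₀ (by linarith) (by positivity)
        rw [add_mul, add_mul, mul_div_assoc', mul_comm (R : ℝ) c]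
        field_simp
        nlinarith
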